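/- For all n ≥ 1, the number of inversion sequences of length n avoiding the pattern 3210 equals the number of inversion sequences of length n avoiding the pattern 3201; i.e. |I_n(3210)| = |I_n(3201)|. -/

import Mathlib

/-- Two integer sequences of the same length are order isomorphic:
entries compare in the same way at every pair of positions. -/
def OrderIsoSeq (a b : List ℕ) : Prop :=
  a.length = b.length ∧
  ∀ i j : ℕ, i < a.length → j < a.length →
    ((a[i]! < a[j]!) ↔ (b[i]! < b[j]!)) ∧ ((a[i]! = a[j]!) ↔ (b[i]! = b[j]!))

/-- A sequence `e` contains the pattern `p` if some (not necessarily consecutive)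
subsequence of `e` is order isomorphic to `p`. -/
def ContainsPat (e p : List ℕ) : Prop :=
  ∃ s : List ℕ, s.Sublist e ∧ OrderIsoSeq s p

/-- A sequence `e` avoids the pattern `p` if it does not contain it. -/
def AvoidsPat (e p : List ℕ) : Prop := ¬ ContainsPat e p

/-- Inversion sequences of length `n`: `e = e_1 ⋯ e_n` with `0 ≤ e_i < i`
(position `i` is stored at index `i - 1`). -/
def InvSeq (n : ℕ) : Set (List ℕ) :=
  {e | e.length = n ∧ ∀ i : ℕ, i < n → e[i]! < i + 1}

/-- `S`-inversion sequences for a finite set `S = {s_1 < ⋯ < s_n}` of positive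
integers: sequences `e = e_1 ⋯ e_n` with `0 ≤ e_i < s_i`. -/
def SInvSeq (S : Finset ℕ) : Set (List ℕ) :=
  {e | e.length = S.card ∧ ∀ i : ℕ, i < S.card → e[i]! < (S.sort (· ≤ ·))[i]!}

/-- `I_n(p)`: inversion sequences of length `n` avoiding the pattern `p`. -/
def InvAvoid (n : ℕ) (p : List ℕ) : Set (List ℕ) :=
  {e ∈ InvSeq n | AvoidsPat e p}

/-- `I_S(p)`: `S`-inversion sequences avoiding the pattern `p`. -/
def SInvAvoid (S : Finset ℕ) (p : List ℕ) : Set (List ℕ) :=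
  {e ∈ SInvSeq S | AvoidsPat e p}

/-!
Write `C k` (`nonRecordMax`) for the largest entry before position `k` that lies below some
earlier entry. Then `e` contains `3210` iff some position `k` with `e k < C k` is followed by a
smaller entry, and `3201` iff it is followed by an entry strictly between `e k` and `C k`. Call
such positions `k` low. The caps `C k` at the low positions are nondecreasing, and refilling the
low positions with any values below their caps changes neither `C` nor the set of low positions.
So, within a class of sequences sharing everything but the low values, `3210`-avoiders are the
fillings with sorted low values, and `3201`-avoiders those with greedy low values: each is the
largest of the remaining ones below its cap. Sorting the low values is a bijection between the
two: sorting keeps every value below its cap, a greedy filling is determined by its multiset of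
values, and every filling can be rearranged greedily.
-/

namespace InversionSequence

open List

def prefixMax (a : ℕ → ℕ) (k : ℕ) : ℕ := (Finset.range k).sup a

def nonRecordMax (a : ℕ → ℕ) (k : ℕ) : ℕ :=
  ((Finset.range k).filter (fun j => a j < prefixMax a j)).sup a

variable {a b : ℕ → ℕ}

theorem lt_prefixMax_iff {t k : ℕ} : t < prefixMax a k ↔ ∃ i < k, t < a i := by
  simp [prefixMax, Finset.lt_sup_iff]

theorem lt_nonRecordMax_iff {t k : ℕ} :
    t < nonRecordMax a k ↔ ∃ j < k, a j < prefixMax a j ∧ t < a j := by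
  simp [nonRecordMax, Finset.lt_sup_iff, and_assoc]

theorem prefixMax_succ (k : ℕ) : prefixMax a (k + 1) = max (prefixMax a k) (a k) := by
  rw [prefixMax, Finset.range_add_one, Finset.sup_insert, sup_comm]; rfl

theorem nonRecordMax_succ (k : ℕ) : nonRecordMax a (k + 1) =
    if a k < prefixMax a k then max (nonRecordMax a k) (a k) else nonRecordMax a k := by
  rw [nonRecordMax, Finset.range_add_one, Finset.filter_insert]
  split_ifs
  · rw [Finset.sup_insert, sup_comm]; rfl
  · rfl

theorem nonRecordMax_mono : Monotone (nonRecordMax a) := fun _ _ hkl =>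
  Finset.sup_mono (Finset.filter_subset_filter _ (Finset.range_mono hkl))

theorem nonRecordMax_le_prefixMax (k : ℕ) : nonRecordMax a k ≤ prefixMax a k :=
  Finset.sup_mono (Finset.filter_subset _ _)

theorem prefixMax_le_of_le_self {k : ℕ} (h : ∀ i < k, a i ≤ i) : prefixMax a k ≤ k :=
  Finset.sup_le fun i hi => (h i (Finset.mem_range.mp hi)).trans (Finset.mem_range.mp hi).le

theorem prefixMax_eq_and_nonRecordMax_eq
    (h : ∀ k, b k = a k ∨ (a k < nonRecordMax a k ∧ b k < nonRecordMax a k)) (k : ℕ) :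
    prefixMax b k = prefixMax a k ∧ nonRecordMax b k = nonRecordMax a k := by
  induction k with
  | zero => simp [prefixMax, nonRecordMax]
  | succ k ih =>
    obtain ⟨hM, hC⟩ := ih
    have hCM := nonRecordMax_le_prefixMax (a := a) k
    rw [prefixMax_succ, prefixMax_succ, nonRecordMax_succ, nonRecordMax_succ, hM, hC]
    rcases h k with heq | ⟨ha, hb⟩
    · simp only [heq, and_self]
    · rw [if_pos (by omega), if_pos (by omega)]
      omega

theorem sublist_four_iff {α : Type*} [Inhabited α] {e : List α} {x₀ x₁ x₂ x₃ : α} :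
    [x₀, x₁, x₂, x₃].Sublist e ↔ ∃ i₀ i₁ i₂ i₃, i₀ < i₁ ∧ i₁ < i₂ ∧ i₂ < i₃ ∧ i₃ < e.length ∧
      e[i₀]! = x₀ ∧ e[i₁]! = x₁ ∧ e[i₂]! = x₂ ∧ e[i₃]! = x₃ := by
  rw [sublist_iff_exists_fin_orderEmbedding_get_eq]
  constructor
  · rintro ⟨f, hf⟩
    have hlt : ∀ s t : Fin 4, s < t → (f s : ℕ) < f t := fun s t hst => f.strictMono hst
    refine ⟨f 0, f 1, f 2, f 3, hlt 0 1 (by decide), hlt 1 2 (by decide), hlt 2 3 (by decide),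
      (f 3).isLt, ?_, ?_, ?_, ?_⟩
    · simpa using (hf 0).symm
    · simpa using (hf 1).symm
    · simpa using (hf 2).symm
    · simpa using (hf 3).symm
  · rintro ⟨i₀, i₁, i₂, i₃, h₀₁, h₁₂, h₂₃, h₃, rfl, rfl, rfl, rfl⟩
    let g : Fin 4 → Fin e.length := ![⟨i₀, by omega⟩, ⟨i₁, by omega⟩, ⟨i₂, by omega⟩, ⟨i₃, h₃⟩]
    have hg : StrictMono g := Fin.strictMono_iff_lt_succ.mpr fun t => by
      fin_cases t <;> simpa [g, Fin.lt_def]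
    refine ⟨OrderEmbedding.ofStrictMono g hg, fun t => ?_⟩
    fin_cases t <;> simp [g, getElem!_pos, show i₀ < e.length by omega,
      show i₁ < e.length by omega, show i₂ < e.length by omega, h₃]

theorem containsPat_iff_of_length_eq_four {e p : List ℕ} (hp : p.length = 4) :
    ContainsPat e p ↔ ∃ i₀ i₁ i₂ i₃, i₀ < i₁ ∧ i₁ < i₂ ∧ i₂ < i₃ ∧ i₃ < e.length ∧
      OrderIsoSeq [e[i₀]!, e[i₁]!, e[i₂]!, e[i₃]!] p := by
  constructor
  · rintro ⟨s, hs, hiso⟩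
    obtain ⟨x₀, x₁, x₂, x₃, rfl⟩ := length_eq_four.mp (hiso.1.trans hp)
    obtain ⟨i₀, i₁, i₂, i₃, h₀₁, h₁₂, h₂₃, h₃, rfl, rfl, rfl, rfl⟩ := sublist_four_iff.mp hs
    exact ⟨i₀, i₁, i₂, i₃, h₀₁, h₁₂, h₂₃, h₃, hiso⟩
  · rintro ⟨i₀, i₁, i₂, i₃, h₀₁, h₁₂, h₂₃, h₃, hiso⟩
    exact ⟨_, sublist_four_iff.mpr ⟨i₀, i₁, i₂, i₃, h₀₁, h₁₂, h₂₃, h₃, rfl, rfl, rfl, rfl⟩, hiso⟩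

theorem orderIsoSeq_3210_iff {x₀ x₁ x₂ x₃ : ℕ} :
    OrderIsoSeq [x₀, x₁, x₂, x₃] [3, 2, 1, 0] ↔ x₁ < x₀ ∧ x₂ < x₁ ∧ x₃ < x₂ := by
  constructor
  · rintro ⟨-, h⟩
    have h₀₁ := h 0 1 (by simp) (by simp)
    have h₁₂ := h 1 2 (by simp) (by simp)
    have h₂₃ := h 2 3 (by simp) (by simp)
    simp at h₀₁ h₁₂ h₂₃
    omega
  · rintro ⟨h₁, h₂, h₃⟩
    refine ⟨rfl, fun i j hi hj => ?_⟩
    simp only [length_cons, length_nil] at hi hj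
    interval_cases i <;> interval_cases j <;> simp <;> omega

theorem orderIsoSeq_3201_iff {x₀ x₁ x₂ x₃ : ℕ} :
    OrderIsoSeq [x₀, x₁, x₂, x₃] [3, 2, 0, 1] ↔ x₁ < x₀ ∧ x₂ < x₃ ∧ x₃ < x₁ := by
  constructor
  · rintro ⟨-, h⟩
    have h₀₁ := h 0 1 (by simp) (by simp)
    have h₂₃ := h 2 3 (by simp) (by simp)
    have h₁₃ := h 1 3 (by simp) (by simp)
    simp at h₀₁ h₂₃ h₁₃
    omega
  · rintro ⟨h₁, h₂, h₃⟩
    refine ⟨rfl, fun i j hi hj => ?_⟩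
    simp only [length_cons, length_nil] at hi hj
    interval_cases i <;> interval_cases j <;> simp <;> omega

variable {e : List ℕ}

theorem containsPat_3210_iff : ContainsPat e [3, 2, 1, 0] ↔
    ∃ k l, k < l ∧ l < e.length ∧ e[l]! < e[k]! ∧ e[k]! < nonRecordMax (e[·]!) k := by
  rw [containsPat_iff_of_length_eq_four (p := [3, 2, 1, 0]) rfl]
  simp only [orderIsoSeq_3210_iff, lt_nonRecordMax_iff, lt_prefixMax_iff]
  constructor
  · rintro ⟨i, j, k, l, hij, hjk, hkl, hl, hji, hkj, hlk⟩
    exact ⟨k, l, hkl, hl, hlk, j, hjk, ⟨i, hij, hji⟩, hkj⟩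
  · rintro ⟨k, l, hkl, hl, hlk, j, hjk, ⟨i, hij, hji⟩, hkj⟩
    exact ⟨i, j, k, l, hij, hjk, hkl, hl, hji, hkj, hlk⟩

theorem containsPat_3201_iff : ContainsPat e [3, 2, 0, 1] ↔
    ∃ k l, k < l ∧ l < e.length ∧ e[k]! < e[l]! ∧ e[l]! < nonRecordMax (e[·]!) k := by
  rw [containsPat_iff_of_length_eq_four (p := [3, 2, 0, 1]) rfl]
  simp only [orderIsoSeq_3201_iff, lt_nonRecordMax_iff, lt_prefixMax_iff]
  constructor
  · rintro ⟨i, j, k, l, hij, hjk, hkl, hl, hji, hkl', hlj⟩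
    exact ⟨k, l, hkl, hl, hkl', j, hjk, ⟨i, hij, hji⟩, hlj⟩
  · rintro ⟨k, l, hkl, hl, hkl', j, hjk, ⟨i, hij, hji⟩, hlj⟩
    exact ⟨i, j, k, l, hij, hjk, hkl, hl, hji, hkl', hlj⟩

/-- Read together with `Forall₂ (· < ·) vs cs`: each value is the largest of the remaining
ones that lie below its cap. -/
def IsGreedy : List ℕ → List ℕ → Prop
  | x :: xs, c :: cs => (∀ z ∈ xs, z < c → z ≤ x) ∧ IsGreedy xs cs
  | _, _ => True

theorem isGreedy_map_iff {l : List ℕ} {f g : ℕ → ℕ} :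
    IsGreedy (l.map f) (l.map g) ↔ l.Pairwise (fun k m => f m < g k → f m ≤ f k) := by
  induction l with
  | nil => simp [IsGreedy]
  | cons k l ih => simp [IsGreedy, ih]

theorem forall₂_lt_orderedInsert {x c : ℕ} {ws cs : List ℕ} (hws : Forall₂ (· < ·) ws cs)
    (hx : x < c) (hcs : (c :: cs).Pairwise (· ≤ ·)) :
    Forall₂ (· < ·) (ws.orderedInsert (· ≤ ·) x) (c :: cs) := by
  induction hws generalizing c with
  | nil => simpa
  | @cons y d ys ds hyd hys ih =>
    have hcd : c ≤ d := rel_of_pairwise_cons hcs mem_cons_self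
    rw [orderedInsert_cons]
    split_ifs with hxy
    · exact .cons hx (.cons hyd hys)
    · exact .cons (by omega) (ih (by omega) hcs.of_cons)

theorem forall₂_lt_insertionSort {vs cs : List ℕ} (hcs : cs.Pairwise (· ≤ ·))
    (hvs : Forall₂ (· < ·) vs cs) : Forall₂ (· < ·) (vs.insertionSort (· ≤ ·)) cs := by
  induction hvs with
  | nil => exact .nil
  | cons hvc _ ih =>
    rw [insertionSort_cons]
    exact forall₂_lt_orderedInsert (ih hcs.of_cons) hvc hcs

theorem IsGreedy.eq_of_perm {vs vs' cs : List ℕ} (hvs : Forall₂ (· < ·) vs cs)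
    (hvs' : Forall₂ (· < ·) vs' cs) (hg : IsGreedy vs cs) (hg' : IsGreedy vs' cs)
    (hp : vs ~ vs') : vs = vs' := by
  induction hvs generalizing vs' with
  | nil => exact Perm.nil_eq hp
  | @cons x c xs cs hxc _ ih =>
    obtain ⟨y, ys, hyc, hys, rfl⟩ : ∃ y ys, y < c ∧ Forall₂ (· < ·) ys cs ∧ vs' = y :: ys := by
      cases hvs' with
      | cons hyc hys => exact ⟨_, _, hyc, hys, rfl⟩
    have hyx : y ≤ x := by
      rcases mem_cons.mp (hp.symm.subset mem_cons_self) with h | h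
      · exact h.le
      · exact hg.1 y h hyc
    have hxy : x ≤ y := by
      rcases mem_cons.mp (hp.subset mem_cons_self) with h | h
      · exact h.le
      · exact hg'.1 x h hxc
    obtain rfl : x = y := le_antisymm hxy hyx
    rw [ih hys hg.2 hg'.2 (perm_cons x |>.mp hp)]

theorem exists_max_lt_of_mem {l : List ℕ} {x c : ℕ} (hx : x ∈ l) (hxc : x < c) :
    ∃ m ∈ l, m < c ∧ ∀ z ∈ l, z < c → z ≤ m := by
  obtain ⟨m, hm, hmax⟩ := (l.toFinset.filter (· < c)).exists_max_image id
    ⟨x, by simp [hx, hxc]⟩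
  simp only [Finset.mem_filter, mem_toFinset, id] at hm hmax
  exact ⟨m, hm.1, hm.2, fun z hz hzc => hmax z ⟨hz, hzc⟩⟩

/-- `ws'` is `ws` with `m` replaced by the smaller `w`. -/
theorem exists_cons_perm_forall₂_lt {w m : ℕ} {ws cs : List ℕ}
    (hws : Forall₂ (· < ·) ws cs) (hm : m ∈ ws) (hwm : w ≤ m) :
    ∃ ws', m :: ws' ~ w :: ws ∧ Forall₂ (· < ·) ws' cs := by
  induction hws with
  | nil => simp at hm
  | @cons y d ys ds hyd hys ih =>
    rcases mem_cons.mp hm with rfl | hm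
    · exact ⟨w :: ys, .swap _ _ _, .cons (by omega) hys⟩
    · obtain ⟨ys', hp, hys'⟩ := ih hm
      refine ⟨y :: ys', ?_, .cons hyd hys'⟩
      exact (Perm.swap y m ys').trans ((hp.cons y).trans (.swap w y ys))

theorem exists_isGreedy_perm {vs cs : List ℕ} (hvs : Forall₂ (· < ·) vs cs) :
    ∃ ws, ws ~ vs ∧ Forall₂ (· < ·) ws cs ∧ IsGreedy ws cs := by
  induction cs generalizing vs with
  | nil => exact ⟨[], by rw [forall₂_nil_right_iff.mp hvs], .nil, trivial⟩
  | cons c cs ih =>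
    obtain ⟨w, ws, hwc, hws, rfl⟩ : ∃ w ws, w < c ∧ Forall₂ (· < ·) ws cs ∧ vs = w :: ws := by
      cases hvs with
      | cons hwc hws => exact ⟨_, _, hwc, hws, rfl⟩
    obtain ⟨m, hm, hmc, hmax⟩ := exists_max_lt_of_mem mem_cons_self hwc
    obtain ⟨ws', hp, hws'⟩ : ∃ ws', m :: ws' ~ w :: ws ∧ Forall₂ (· < ·) ws' cs := by
      rcases mem_cons.mp hm with rfl | hm
      · exact ⟨ws, .refl _, hws⟩
      · exact exists_cons_perm_forall₂_lt hws hm (hmax w mem_cons_self hwc)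
    obtain ⟨g, hg, hgcs, hgreedy⟩ := ih hws'
    refine ⟨m :: g, (hg.cons m).trans hp, .cons hmc hgcs, fun z hz hzc => ?_, hgreedy⟩
    exact hmax z (hp.subset (mem_cons_of_mem m (hg.subset hz))) hzc

theorem getElem!_idxOf_map {α β : Type*} [BEq α] [LawfulBEq α] [Inhabited β] {l : List α}
    {f : α → β} {k : α} (hk : k ∈ l) :
    (l.map f)[l.idxOf k]! = f k := by
  have hlt : l.idxOf k < l.length := idxOf_lt_length_iff.mpr hk
  simp [hlt, getElem_idxOf]

theorem map_getElem!_idxOf {α β : Type*} [BEq α] [LawfulBEq α] [Inhabited β] {l : List α}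
    {ws : List β} (hl : l.Nodup) (hlen : ws.length = l.length) :
    l.map (fun k => ws[l.idxOf k]!) = ws := by
  refine ext_getElem (by simp [hlen]) fun t _ ht => ?_
  simp [hl.idxOf_getElem, ht]

/-- The positions `k` ending an occurrence of `210`: `e k` lies below an entry that is
itself below an earlier one. -/
def lowPositions (e : List ℕ) : List ℕ :=
  (range e.length).filter fun k => e[k]! < nonRecordMax (e[·]!) k

def lowValues (e : List ℕ) : List ℕ := (lowPositions e).map (e[·]!)

def lowCaps (e : List ℕ) : List ℕ := (lowPositions e).map (nonRecordMax (e[·]!))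

def setLowValues (e ws : List ℕ) : List ℕ :=
  (range e.length).map fun k =>
    if k ∈ lowPositions e then ws[(lowPositions e).idxOf k]! else e[k]!

def sortLowValues (e : List ℕ) : List ℕ :=
  setLowValues e ((lowValues e).insertionSort (· ≤ ·))

variable {ws : List ℕ}

theorem mem_lowPositions {k : ℕ} :
    k ∈ lowPositions e ↔ k < e.length ∧ e[k]! < nonRecordMax (e[·]!) k := by
  simp [lowPositions]

theorem mem_lowPositions_of_le {k l : ℕ} (hkl : k ≤ l) (hl : l < e.length)
    (h : e[l]! < nonRecordMax (e[·]!) k) : l ∈ lowPositions e :=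
  mem_lowPositions.mpr ⟨hl, h.trans_le (nonRecordMax_mono hkl)⟩

theorem pairwise_lt_lowPositions : (lowPositions e).Pairwise (· < ·) :=
  pairwise_lt_range.filter _

theorem pairwise_lowPositions_iff {R : ℕ → ℕ → Prop} :
    (lowPositions e).Pairwise R ↔
      ∀ k l, k < l → k ∈ lowPositions e → l ∈ lowPositions e → R k l := by
  rw [lowPositions, pairwise_filter, pairwise_iff_getElem]
  simp only [length_range, getElem_range, mem_filter, mem_range, decide_eq_true_eq]
  exact ⟨fun h k l hkl hk hl => h k l (by omega) hl.1 hkl hk.2 hl.2,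
    fun h k l _ hl hkl hk' hl' => h k l hkl ⟨by omega, hk'⟩ ⟨hl, hl'⟩⟩

theorem pairwise_le_lowCaps : (lowCaps e).Pairwise (· ≤ ·) :=
  pairwise_map.mpr (pairwise_lt_lowPositions.imp fun hkl => nonRecordMax_mono hkl.le)

theorem forall₂_lowValues_lowCaps : Forall₂ (· < ·) (lowValues e) (lowCaps e) := by
  rw [lowValues, lowCaps, forall₂_map_left_iff, forall₂_map_right_iff, forall₂_same]
  exact fun k hk => (mem_lowPositions.mp hk).2

theorem length_setLowValues : (setLowValues e ws).length = e.length := by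
  simp [setLowValues]

theorem getElem!_setLowValues (k : ℕ) : (setLowValues e ws)[k]! =
    if k ∈ lowPositions e then ws[(lowPositions e).idxOf k]! else e[k]! := by
  by_cases hk : k < e.length
  · simp [setLowValues, hk]
  · have : k ∉ lowPositions e := fun h => hk (mem_lowPositions.mp h).1
    simp [setLowValues, hk, this]

theorem avoidsPat_3210_iff : AvoidsPat e [3, 2, 1, 0] ↔ (lowValues e).Pairwise (· ≤ ·) := by
  rw [AvoidsPat, containsPat_3210_iff, lowValues, pairwise_map, pairwise_lowPositions_iff]
  constructor
  · intro h k l hkl hk hl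
    by_contra hlk
    exact h ⟨k, l, hkl, (mem_lowPositions.mp hl).1, by omega, (mem_lowPositions.mp hk).2⟩
  · rintro h ⟨k, l, hkl, hl, hlk, hk⟩
    have := h k l hkl (mem_lowPositions.mpr ⟨by omega, hk⟩)
      (mem_lowPositions_of_le hkl.le hl (hlk.trans hk))
    omega

theorem avoidsPat_3201_iff : AvoidsPat e [3, 2, 0, 1] ↔ IsGreedy (lowValues e) (lowCaps e) := by
  rw [AvoidsPat, containsPat_3201_iff, lowValues, lowCaps, isGreedy_map_iff,
    pairwise_lowPositions_iff]
  constructor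
  · intro h k l hkl _ hl hlk
    by_contra hkl'
    exact h ⟨k, l, hkl, (mem_lowPositions.mp hl).1, by omega, hlk⟩
  · rintro h ⟨k, l, hkl, hl, hkl', hlk⟩
    have := h k l hkl (mem_lowPositions.mpr ⟨by omega, hkl'.trans hlk⟩)
      (mem_lowPositions_of_le hkl.le hl hlk) hlk
    omega

theorem getElem!_idxOf_lt_nonRecordMax (hws : Forall₂ (· < ·) ws (lowCaps e)) {k : ℕ}
    (hk : k ∈ lowPositions e) : ws[(lowPositions e).idxOf k]! < nonRecordMax (e[·]!) k := by
  have hlt : (lowPositions e).idxOf k < (lowPositions e).length := idxOf_lt_length_iff.mpr hk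
  have hlen : ws.length = (lowPositions e).length := by simpa [lowCaps] using hws.length_eq
  have := hws.get (hlen ▸ hlt) (by simpa [lowCaps] using hlt)
  simpa [lowCaps, hlen ▸ hlt, getElem_idxOf] using this

theorem nonRecordMax_setLowValues (hws : Forall₂ (· < ·) ws (lowCaps e)) :
    nonRecordMax ((setLowValues e ws)[·]!) = nonRecordMax (e[·]!) := by
  funext k
  refine (prefixMax_eq_and_nonRecordMax_eq (fun k => ?_) k).2
  rw [getElem!_setLowValues]
  split_ifs with hk
  · exact .inr ⟨(mem_lowPositions.mp hk).2, getElem!_idxOf_lt_nonRecordMax hws hk⟩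
  · exact .inl rfl

theorem lowPositions_setLowValues (hws : Forall₂ (· < ·) ws (lowCaps e)) :
    lowPositions (setLowValues e ws) = lowPositions e := by
  rw [lowPositions, lowPositions, length_setLowValues, nonRecordMax_setLowValues hws]
  refine filter_congr fun k hk => ?_
  rw [getElem!_setLowValues]
  split_ifs with hlow
  · rw [decide_eq_true (getElem!_idxOf_lt_nonRecordMax hws hlow),
      decide_eq_true (mem_lowPositions.mp hlow).2]
  · rfl

theorem lowCaps_setLowValues (hws : Forall₂ (· < ·) ws (lowCaps e)) :
    lowCaps (setLowValues e ws) = lowCaps e := by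
  rw [lowCaps, lowCaps, lowPositions_setLowValues hws, nonRecordMax_setLowValues hws]

theorem lowValues_setLowValues (hws : Forall₂ (· < ·) ws (lowCaps e)) :
    lowValues (setLowValues e ws) = ws := by
  rw [lowValues, lowPositions_setLowValues hws]
  calc (lowPositions e).map (fun k => (setLowValues e ws)[k]!)
      = (lowPositions e).map (fun k => ws[(lowPositions e).idxOf k]!) :=
        map_congr_left fun k hk => by rw [getElem!_setLowValues, if_pos hk]
    _ = ws := map_getElem!_idxOf pairwise_lt_lowPositions.nodup
        (by simpa [lowCaps] using hws.length_eq)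

theorem setLowValues_setLowValues (hws : Forall₂ (· < ·) ws (lowCaps e)) (ws' : List ℕ) :
    setLowValues (setLowValues e ws) ws' = setLowValues e ws' := by
  refine ext_getElem! (by simp only [length_setLowValues]) fun k => ?_
  rw [getElem!_setLowValues, getElem!_setLowValues, lowPositions_setLowValues hws,
    getElem!_setLowValues]
  split_ifs <;> rfl

theorem setLowValues_lowValues : setLowValues e (lowValues e) = e := by
  refine ext_getElem! length_setLowValues fun k => ?_
  rw [getElem!_setLowValues]
  split_ifs with hk
  · exact getElem!_idxOf_map hk
  · rfl

theorem setLowValues_mem_invSeq {n : ℕ} (hws : Forall₂ (· < ·) ws (lowCaps e))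
    (he : e ∈ InvSeq n) : setLowValues e ws ∈ InvSeq n := by
  obtain ⟨hlen, hbound⟩ := he
  refine ⟨length_setLowValues.trans hlen, fun i hi => ?_⟩
  rw [getElem!_setLowValues]
  split_ifs with hk
  · have hmax : prefixMax (e[·]!) i ≤ i :=
      prefixMax_le_of_le_self fun j hj => Nat.lt_succ_iff.mp (hbound j (hj.trans hi))
    have := (getElem!_idxOf_lt_nonRecordMax hws hk).trans_le (nonRecordMax_le_prefixMax i)
    omega
  · exact hbound i hi

theorem forall₂_insertionSort_lowValues :
    Forall₂ (· < ·) ((lowValues e).insertionSort (· ≤ ·)) (lowCaps e) :=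
  forall₂_lt_insertionSort pairwise_le_lowCaps forall₂_lowValues_lowCaps

theorem lowValues_sortLowValues :
    lowValues (sortLowValues e) = (lowValues e).insertionSort (· ≤ ·) :=
  lowValues_setLowValues forall₂_insertionSort_lowValues

theorem lowCaps_sortLowValues : lowCaps (sortLowValues e) = lowCaps e :=
  lowCaps_setLowValues forall₂_insertionSort_lowValues

theorem setLowValues_sortLowValues (ws : List ℕ) :
    setLowValues (sortLowValues e) ws = setLowValues e ws :=
  setLowValues_setLowValues forall₂_insertionSort_lowValues ws

theorem sortLowValues_mem_invAvoid {n : ℕ} (he : e ∈ InvSeq n) :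
    sortLowValues e ∈ InvAvoid n [3, 2, 1, 0] := by
  refine ⟨setLowValues_mem_invSeq forall₂_insertionSort_lowValues he, ?_⟩
  rw [avoidsPat_3210_iff, lowValues_sortLowValues]
  exact pairwise_insertionSort _ _

theorem injOn_sortLowValues (n : ℕ) : Set.InjOn sortLowValues (InvAvoid n [3, 2, 0, 1]) := by
  intro e he e' he' h
  have hcaps : lowCaps e = lowCaps e' := by
    rw [← lowCaps_sortLowValues, h, lowCaps_sortLowValues]
  have hperm : lowValues e ~ lowValues e' := by
    have hsort := congrArg lowValues h
    rw [lowValues_sortLowValues, lowValues_sortLowValues] at hsort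
    calc lowValues e ~ (lowValues e).insertionSort (· ≤ ·) := (perm_insertionSort _ _).symm
      _ = (lowValues e').insertionSort (· ≤ ·) := hsort
      _ ~ lowValues e' := perm_insertionSort _ _
  have hvals : lowValues e = lowValues e' :=
    IsGreedy.eq_of_perm forall₂_lowValues_lowCaps (hcaps ▸ forall₂_lowValues_lowCaps)
      (avoidsPat_3201_iff.mp he.2) (hcaps ▸ avoidsPat_3201_iff.mp he'.2) hperm
  calc e = setLowValues (sortLowValues e) (lowValues e) := by
        rw [setLowValues_sortLowValues, setLowValues_lowValues]
    _ = setLowValues (sortLowValues e') (lowValues e') := by rw [h, hvals]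
    _ = e' := by rw [setLowValues_sortLowValues, setLowValues_lowValues]

theorem surjOn_sortLowValues (n : ℕ) :
    Set.SurjOn sortLowValues (InvAvoid n [3, 2, 0, 1]) (InvAvoid n [3, 2, 1, 0]) := by
  rintro f ⟨hf, hfavoid⟩
  obtain ⟨ws, hperm, hws, hgreedy⟩ := exists_isGreedy_perm (forall₂_lowValues_lowCaps (e := f))
  have hsort : ws.insertionSort (· ≤ ·) = lowValues f :=
    Perm.eq_of_pairwise' (pairwise_insertionSort _ _) (avoidsPat_3210_iff.mp hfavoid)
      ((perm_insertionSort _ _).trans hperm)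
  refine ⟨setLowValues f ws, ⟨setLowValues_mem_invSeq hws hf, ?_⟩, ?_⟩
  · rwa [avoidsPat_3201_iff, lowValues_setLowValues hws, lowCaps_setLowValues hws]
  · rw [sortLowValues, setLowValues_setLowValues hws, lowValues_setLowValues hws, hsort,
      setLowValues_lowValues]

end InversionSequence

theorem stmt_16_general (n : ℕ) :
    (InvAvoid n [3, 2, 1, 0]).ncard = (InvAvoid n [3, 2, 0, 1]).ncard := by
  open InversionSequence in
  have hbij : Set.BijOn sortLowValues (InvAvoid n [3, 2, 0, 1]) (InvAvoid n [3, 2, 1, 0]) :=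
    ⟨fun _ he => sortLowValues_mem_invAvoid he.1, injOn_sortLowValues n, surjOn_sortLowValues n⟩
  exact hbij.ncard_eq.symm

/-- Theorem: `|I_n(3210)| = |I_n(3201)|` for all `n ≥ 1`. -/
theorem stmt_16 (n : ℕ) (hn : 1 ≤ n) :
    (InvAvoid n [3, 2, 1, 0]).ncard = (InvAvoid n [3, 2, 0, 1]).ncard :=
  stmt_16_general n
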